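/- Let n ≥ 1, let z₁,…,z_n ∈ ℂ be distinct with Im z_k > 0 for each k, let s₁,…,s_n ∈ ℂ² be such that the Gramian matrix M is invertible, and let r₁,…,r_n be the unique solution of the linear system (L1). Then Σ_{k=1}^n ( ⟨s_k, r_k⟩ + ⟨r_k, s_k⟩ ) = 2i Σ_{k=1}^n (conj(z_k) − z_k) = 4 Σ_{k=1}^n Im z_k. -/

import Mathlib

open MeasureTheory Matrix ENNReal Filter

noncomputable section

/-- The Pauli matrix `σ₃ = diag(1, -1)`. -/
def sigma3 : Matrix (Fin 2) (Fin 2) ℂ := !![1, 0; 0, -1]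

/-- `Q(w)` : the off-diagonal matrix with `(1,2)`-entry `w` and `(2,1)`-entry `-conj w`. -/
def Qm (w : ℂ) : Matrix (Fin 2) (Fin 2) ℂ := !![0, w; -(starRingEnd ℂ w), 0]

/-- The Hermitian inner product `⟨u,v⟩ = conj u₁ * v₁ + conj u₂ * v₂` on `ℂ²`. -/
def inn (u v : Fin 2 → ℂ) : ℂ := starRingEnd ℂ (u 0) * v 0 + starRingEnd ℂ (u 1) * v 1

/-- The outer product `u ⊗ conj v`. -/
def outer (u v : Fin 2 → ℂ) : Matrix (Fin 2) (Fin 2) ℂ :=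
  Matrix.of fun a b => u a * starRingEnd ℂ (v b)

/-- The Gramian matrix `M_{k,j} = -i ⟨s_j, s_k⟩ / (conj z_k - z_j)`. -/
def gram {n : ℕ} (z : Fin n → ℂ) (s : Fin n → Fin 2 → ℂ) : Matrix (Fin n) (Fin n) ℂ :=
  Matrix.of fun k j => -Complex.I * inn (s j) (s k) / (starRingEnd ℂ (z k) - z j)

/-- The `(j,k)`-cofactor `D_{j,k}` of a square matrix. -/
def cof {n : ℕ} (A : Matrix (Fin n) (Fin n) ℂ) (j k : Fin n) : ℂ := A.adjugate k j

/-- The linear system (L1): `i s_k = ∑_j (⟨s_j,s_k⟩/(conj z_k - z_j)) r_j`. -/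
def L1sys {n : ℕ} (z : Fin n → ℂ) (s r : Fin n → Fin 2 → ℂ) : Prop :=
  ∀ k, Complex.I • s k = ∑ j, (inn (s j) (s k) / (starRingEnd ℂ (z k) - z j)) • r j

/-- The linear system (L2): `i r_k = ∑_j (⟨r_j,r_k⟩/(conj z_j - z_k)) s_j`. -/
def L2sys {n : ℕ} (z : Fin n → ℂ) (s r : Fin n → Fin 2 → ℂ) : Prop :=
  ∀ k, Complex.I • r k = ∑ j, (inn (r j) (r k) / (starRingEnd ℂ (z j) - z k)) • s j

/-- A classical solution of the cubic NLS equation `i q_t + q_xx + 2 |q|² q = 0`;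
functions of `(x, t)` are encoded as `q : ℝ → ℝ → ℂ`, `x` first. -/
def IsClassicalNLS (q : ℝ → ℝ → ℂ) : Prop :=
  (∀ t, ContDiff ℝ 2 fun x => q x t) ∧ (∀ x, ContDiff ℝ 1 fun t => q x t) ∧
    ∀ x t, Complex.I * deriv (fun τ => q x τ) t + deriv (deriv fun y => q y t) x
      + 2 * (‖q x t‖ : ℂ) ^ 2 * q x t = 0

/-- The `x`-part Lax matrix `U = -i z σ₃ + Q(w)`. -/
def Ux (z w : ℂ) : Matrix (Fin 2) (Fin 2) ℂ := (-(Complex.I * z)) • sigma3 + Qm w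

/-- The `t`-part Lax matrix `V = i(|w|² - 2z²) σ₃ + 2 z Q(w) - i Q(w_x) σ₃`. -/
def Vt (z w wx : ℂ) : Matrix (Fin 2) (Fin 2) ℂ :=
  (Complex.I * ((‖w‖ : ℂ) ^ 2 - 2 * z ^ 2)) • sigma3 + (2 * z) • Qm w
    - Complex.I • (Qm wx * sigma3)

/-- The dressed potential `q = q₀ - (2/D) ∑_{k,j} D_{j,k} s_{j,1} conj (s_{k,2})` (pointwise). -/
def dressQ {n : ℕ} (z : Fin n → ℂ) (q0 : ℂ) (s : Fin n → Fin 2 → ℂ) : ℂ :=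
  q0 - 2 / (gram z s).det *
    ∑ k, ∑ j, cof (gram z s) j k * s j 0 * starRingEnd ℂ (s k 1)

/-- `Σ^S` of the 2-soliton, as a function of the phases `φ₁, φ₂, ψ₁, ψ₂`. -/
def SigmaSof (η₁ η₂ ξ₁ ξ₂ φ₁ φ₂ ψ₁ ψ₂ : ℝ) : ℂ :=
  (Complex.exp (-2*(η₂:ℂ)*(φ₂:ℂ) + 2*Complex.I*(ψ₁:ℂ)) +
      Complex.exp (2*(η₂:ℂ)*(φ₂:ℂ) + 2*Complex.I*(ψ₁:ℂ))) / (2*(η₂:ℂ))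
  + (Complex.exp (-2*(η₁:ℂ)*(φ₁:ℂ) + 2*Complex.I*(ψ₂:ℂ)) +
      Complex.exp (2*(η₁:ℂ)*(φ₁:ℂ) + 2*Complex.I*(ψ₂:ℂ))) / (2*(η₁:ℂ))
  - (Complex.exp (-2*(η₂:ℂ)*(φ₂:ℂ) + 2*Complex.I*(ψ₁:ℂ)) +
      Complex.exp (2*(η₁:ℂ)*(φ₁:ℂ) + 2*Complex.I*(ψ₂:ℂ))) /
        ((η₁:ℂ) + (η₂:ℂ) + Complex.I*((ξ₁:ℂ) - (ξ₂:ℂ)))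
  - (Complex.exp (-2*(η₁:ℂ)*(φ₁:ℂ) + 2*Complex.I*(ψ₂:ℂ)) +
      Complex.exp (2*(η₂:ℂ)*(φ₂:ℂ) + 2*Complex.I*(ψ₁:ℂ))) /
        ((η₁:ℂ) + (η₂:ℂ) - Complex.I*((ξ₁:ℂ) - (ξ₂:ℂ)))

/-- `D^S` of the 2-soliton, as a function of the phases `φ₁, φ₂, ψ₁, ψ₂`. -/
def DSof (η₁ η₂ ξ₁ ξ₂ φ₁ φ₂ ψ₁ ψ₂ : ℝ) : ℂ :=
  (Complex.exp (-2*(η₁:ℂ)*(φ₁:ℂ)) + Complex.exp (2*(η₁:ℂ)*(φ₁:ℂ))) *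
      (Complex.exp (-2*(η₂:ℂ)*(φ₂:ℂ)) + Complex.exp (2*(η₂:ℂ)*(φ₂:ℂ))) / (4*(η₁:ℂ)*(η₂:ℂ))
  - (Complex.exp (-(η₁:ℂ)*(φ₁:ℂ) - (η₂:ℂ)*(φ₂:ℂ) + Complex.I*((ψ₁:ℂ) - (ψ₂:ℂ))) +
      Complex.exp ((η₁:ℂ)*(φ₁:ℂ) + (η₂:ℂ)*(φ₂:ℂ) - Complex.I*((ψ₁:ℂ) - (ψ₂:ℂ)))) *
    (Complex.exp (-(η₁:ℂ)*(φ₁:ℂ) - (η₂:ℂ)*(φ₂:ℂ) - Complex.I*((ψ₁:ℂ) - (ψ₂:ℂ))) +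
      Complex.exp ((η₁:ℂ)*(φ₁:ℂ) + (η₂:ℂ)*(φ₂:ℂ) + Complex.I*((ψ₁:ℂ) - (ψ₂:ℂ)))) /
    (((η₁:ℂ) + (η₂:ℂ))^2 + ((ξ₁:ℂ) - (ξ₂:ℂ))^2)

/-- The phase `φ = x + 4 ξ t - x_c`. -/
def phiSol (ξ xc x t : ℝ) : ℝ := x + 4*ξ*t - xc

/-- The phase `ψ = θ - ξ (x + 2 ξ t - x_c) + 2 η² t`. -/
def psiSol (θ ξ xc η x t : ℝ) : ℝ := θ - ξ*(x + 2*ξ*t - xc) + 2*η^2*t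

/-- `D^S(x,t)` for the 2-soliton with parameters `η₁, η₂, ξ₁, ξ₂, x₁, x₂, θ₁, θ₂`. -/
def twoSolitonD (η₁ η₂ ξ₁ ξ₂ x₁ x₂ θ₁ θ₂ x t : ℝ) : ℂ :=
  DSof η₁ η₂ ξ₁ ξ₂ (phiSol ξ₁ x₁ x t) (phiSol ξ₂ x₂ x t)
    (psiSol θ₁ ξ₁ x₁ η₁ x t) (psiSol θ₂ ξ₂ x₂ η₂ x t)

/-- `Σ^S(x,t)` for the 2-soliton. -/
def twoSolitonSigma (η₁ η₂ ξ₁ ξ₂ x₁ x₂ θ₁ θ₂ x t : ℝ) : ℂ :=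
  SigmaSof η₁ η₂ ξ₁ ξ₂ (phiSol ξ₁ x₁ x t) (phiSol ξ₂ x₂ x t)
    (psiSol θ₁ ξ₁ x₁ η₁ x t) (psiSol θ₂ ξ₂ x₂ η₂ x t)

/-- The 2-soliton `q^S = 2 Σ^S / D^S`. -/
def twoSoliton (η₁ η₂ ξ₁ ξ₂ x₁ x₂ θ₁ θ₂ x t : ℝ) : ℂ :=
  2 * twoSolitonSigma η₁ η₂ ξ₁ ξ₂ x₁ x₂ θ₁ θ₂ x t / twoSolitonD η₁ η₂ ξ₁ ξ₂ x₁ x₂ θ₁ θ₂ x t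

/-- The separable (Jost-type) form
`s = e^{-i conj z (x - x_j) - 2 i conj z² t + i θ_j} f - e^{i conj z (x - x_j) + 2 i conj z² t - i θ_j} g`. -/
def jost (zj : ℂ) (xj θj : ℝ) (f g : ℝ → ℝ → Fin 2 → ℂ) (x t : ℝ) : Fin 2 → ℂ :=
  Complex.exp (-(Complex.I) * starRingEnd ℂ zj * ((x:ℂ) - (xj:ℂ))
      - 2*Complex.I*(starRingEnd ℂ zj)^2*(t:ℂ) + Complex.I*(θj:ℂ)) • f x t
  - Complex.exp (Complex.I * starRingEnd ℂ zj * ((x:ℂ) - (xj:ℂ))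
      + 2*Complex.I*(starRingEnd ℂ zj)^2*(t:ℂ) - Complex.I*(θj:ℂ)) • g x t

/-- The pair of eigenvalues `z_j = ξ_j + i η_j`, `j = 1, 2`. -/
def zvec (ξ₁ η₁ ξ₂ η₂ : ℝ) : Fin 2 → ℂ :=
  ![(ξ₁:ℂ) + (η₁:ℂ)*Complex.I, (ξ₂:ℂ) + (η₂:ℂ)*Complex.I]

/-- The two vector functions `s₁, s₂` in separable form. -/
def sJ (ξ₁ η₁ ξ₂ η₂ x₁ x₂ θ₁ θ₂ : ℝ) (f g : Fin 2 → ℝ → ℝ → Fin 2 → ℂ) (j : Fin 2)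
    (x t : ℝ) : Fin 2 → ℂ :=
  jost (zvec ξ₁ η₁ ξ₂ η₂ j) (![x₁, x₂] j) (![θ₁, θ₂] j) (f j) (g j) x t

/-- The explicit vector solutions used to build the `n`-soliton from `q₀ = 0`. -/
def solS {n : ℕ} (z : Fin n → ℂ) (xs θ : Fin n → ℝ) (j : Fin n) (x t : ℝ) : Fin 2 → ℂ :=
  ![Complex.exp (-(Complex.I) * starRingEnd ℂ (z j) * ((x:ℂ) - ((xs j : ℝ):ℂ))
      - 2*Complex.I*(starRingEnd ℂ (z j))^2*(t:ℂ) + Complex.I*((θ j : ℝ):ℂ)),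
    -Complex.exp (Complex.I * starRingEnd ℂ (z j) * ((x:ℂ) - ((xs j : ℝ):ℂ))
      + 2*Complex.I*(starRingEnd ℂ (z j))^2*(t:ℂ) - Complex.I*((θ j : ℝ):ℂ))]

/-- The `n`-soliton with parameters `{ξ_j, η_j, x_j, θ_j}`. -/
def nSoliton {n : ℕ} (ξ η xs θ : Fin n → ℝ) (x t : ℝ) : ℂ :=
  dressQ (fun j => (ξ j : ℂ) + (η j : ℂ)*Complex.I) 0
    (fun j => solS (fun j => (ξ j : ℂ) + (η j : ℂ)*Complex.I) xs θ j x t)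

/-!
Write `S`, `R` for the `n × 2` matrices with rows `s_k`, `r_k`. Then (L1) says `S = M R`, the
Gramian `M` is Hermitian, and it satisfies the displacement equation
`diag(z̄) M - M diag(z) = -i S Sᴴ`. Multiplying by `M⁻¹` and taking traces gives
`∑ (z̄_k - z_k) = -i tr(Sᴴ R)`, while `∑ (⟨s_k, r_k⟩ + ⟨r_k, s_k⟩) = tr(Sᴴ R) + tr(Rᴴ S)` and both
traces equal `tr(Rᴴ M R)`.
-/

theorem conj_sub_ne_zero_of_im_pos {w u : ℂ} (hw : 0 < w.im) (hu : 0 < u.im) :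
    starRingEnd ℂ w - u ≠ 0 := by
  intro h
  have him := congrArg Complex.im h
  simp only [Complex.sub_im, Complex.conj_im, Complex.zero_im] at him
  linarith

theorem inn_eq_star_dotProduct (u v : Fin 2 → ℂ) : inn u v = star u ⬝ᵥ v := by
  simp [inn, dotProduct, Fin.sum_univ_two]

theorem star_inn (u v : Fin 2 → ℂ) : starRingEnd ℂ (inn u v) = inn v u := by
  simp only [inn, map_add, map_mul, Complex.conj_conj]
  ring

theorem sum_inn_eq_trace {n : ℕ} (u v : Fin n → Fin 2 → ℂ) :
    ∑ k, inn (u k) (v k) = ((Matrix.of u)ᴴ * Matrix.of v).trace := by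
  simp only [inn_eq_star_dotProduct, dotProduct, trace, diag, mul_apply, conjTranspose_apply,
    of_apply, Pi.star_apply]
  exact Finset.sum_comm

theorem gram_isHermitian {n : ℕ} (z : Fin n → ℂ) (s : Fin n → Fin 2 → ℂ) :
    (gram z s).IsHermitian := by
  ext k j
  have hden : starRingEnd ℂ (starRingEnd ℂ (z j) - z k) = -(starRingEnd ℂ (z k) - z j) := by
    rw [map_sub, Complex.conj_conj, neg_sub]
  simp only [conjTranspose_apply, _root_.gram, of_apply, RCLike.star_def, map_div₀, map_mul,
    map_neg, Complex.conj_I, star_inn, hden, div_neg]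
  ring

theorem L1sys.of_eq_gram_mul {n : ℕ} {z : Fin n → ℂ} {s r : Fin n → Fin 2 → ℂ}
    (h : L1sys z s r) : Matrix.of s = gram z s * Matrix.of r := by
  ext k a
  have hk := congrFun (h k) a
  simp only [Pi.smul_apply, Finset.sum_apply, smul_eq_mul] at hk
  calc s k a = -Complex.I * (Complex.I * s k a) := by
        rw [← mul_assoc, neg_mul, Complex.I_mul_I, neg_neg, one_mul]
    _ = (gram z s * Matrix.of r) k a := by
        rw [hk, Finset.mul_sum, mul_apply]
        refine Finset.sum_congr rfl fun j _ => ?_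
        simp only [_root_.gram, of_apply]
        ring

theorem diagonal_conj_mul_gram_sub_gram_mul_diagonal {n : ℕ} {z : Fin n → ℂ}
    (hz : ∀ k j, starRingEnd ℂ (z k) - z j ≠ 0) (s : Fin n → Fin 2 → ℂ) :
    diagonal (fun k => starRingEnd ℂ (z k)) * gram z s - gram z s * diagonal z
      = (-Complex.I) • (Matrix.of s * (Matrix.of s)ᴴ) := by
  ext k j
  have hs : (Matrix.of s * (Matrix.of s)ᴴ) k j = inn (s j) (s k) := by
    simp only [inn_eq_star_dotProduct, mul_apply, dotProduct, conjTranspose_apply, of_apply,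
      Pi.star_apply, mul_comm]
  rw [Matrix.sub_apply, diagonal_mul, mul_diagonal, Matrix.smul_apply, hs, smul_eq_mul]
  simp only [_root_.gram, of_apply]
  field_simp [hz k j]
  ring

theorem trace_sub_trace_eq_trace_inv_mul {m 𝕜 : Type*} [Fintype m] [DecidableEq m] [Field 𝕜]
    {A D E X : Matrix m m 𝕜} (hA : IsUnit A) (h : D * A - A * E = X) :
    D.trace - E.trace = (A⁻¹ * X).trace := by
  have hdet : IsUnit A.det := (isUnit_iff_isUnit_det A).mp hA
  rw [← h, Matrix.mul_sub, trace_sub, trace_mul_comm, Matrix.mul_assoc,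
    mul_nonsing_inv A hdet, ← Matrix.mul_assoc, nonsing_inv_mul A hdet, Matrix.mul_one,
    Matrix.one_mul]

theorem trace_conjTranspose_mul_eq_of_eq_mul {m p 𝕜 : Type*} [Fintype m] [Fintype p] [RCLike 𝕜]
    {A : Matrix m m 𝕜} (hA : A.IsHermitian) {S R : Matrix m p 𝕜} (h : S = A * R) :
    (Sᴴ * R).trace = (Rᴴ * S).trace := by
  rw [h, conjTranspose_mul, hA.eq, Matrix.mul_assoc]

theorem trace_inv_mul_mul_conjTranspose {m p 𝕜 : Type*} [Fintype m] [DecidableEq m] [Fintype p]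
    [RCLike 𝕜] {A : Matrix m m 𝕜} (hA : IsUnit A) {S R : Matrix m p 𝕜} (h : S = A * R) :
    (A⁻¹ * (S * Sᴴ)).trace = (Sᴴ * R).trace := by
  have hdet : IsUnit A.det := (isUnit_iff_isUnit_det A).mp hA
  rw [← Matrix.mul_assoc, h, ← Matrix.mul_assoc, nonsing_inv_mul A hdet, Matrix.one_mul,
    ← h, trace_mul_comm]

theorem stmt_7_general (n : ℕ) (z : Fin n → ℂ)
    (him : ∀ k, 0 < (z k).im) (s : Fin n → Fin 2 → ℂ) (hM : IsUnit (gram z s))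
    (r : Fin n → Fin 2 → ℂ) (hr : L1sys z s r) :
    ∑ k, (inn (s k) (r k) + inn (r k) (s k)) =
        2 * Complex.I * ∑ k, (starRingEnd ℂ (z k) - z k) ∧
      ∑ k, (inn (s k) (r k) + inn (r k) (s k)) = 4 * ∑ k, ((z k).im : ℂ) := by
  set T := ((Matrix.of s)ᴴ * Matrix.of r).trace
  have hSR := hr.of_eq_gram_mul
  have hsum : ∑ k, (inn (s k) (r k) + inn (r k) (s k)) = 2 * T := by
    rw [Finset.sum_add_distrib, sum_inn_eq_trace, sum_inn_eq_trace,
      ← trace_conjTranspose_mul_eq_of_eq_mul (gram_isHermitian z s) hSR]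
    ring
  have htrace : ∑ k, (starRingEnd ℂ (z k) - z k) = -Complex.I * T := by
    have hdisp := diagonal_conj_mul_gram_sub_gram_mul_diagonal
      (fun k j => conj_sub_ne_zero_of_im_pos (him k) (him j)) s
    rw [Finset.sum_sub_distrib, ← trace_diagonal, ← trace_diagonal z,
      trace_sub_trace_eq_trace_inv_mul hM hdisp, Matrix.mul_smul, trace_smul,
      trace_inv_mul_mul_conjTranspose hM hSR, smul_eq_mul]
  have him_sum : ∑ k, (starRingEnd ℂ (z k) - z k) = -2 * Complex.I * ∑ k, ((z k).im : ℂ) := by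
    rw [Finset.mul_sum]
    refine Finset.sum_congr rfl fun k _ => ?_
    rw [← neg_sub, Complex.sub_conj]
    push_cast
    ring
  refine ⟨?_, ?_⟩
  · rw [hsum, htrace]
    linear_combination (2 * T) * Complex.I_sq
  · rw [hsum]
    linear_combination (2 * Complex.I) * (htrace.symm.trans him_sum)
      + (2 * T - 4 * ∑ k, ((z k).im : ℂ)) * Complex.I_sq

/-- The trace identity `∑_k (⟨s_k, r_k⟩ + ⟨r_k, s_k⟩) = 2i ∑_k (conj z_k - z_k) = 4 ∑_k Im z_k`. -/
theorem stmt_7 (n : ℕ) (hn : 1 ≤ n) (z : Fin n → ℂ) (hz : Function.Injective z)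
    (him : ∀ k, 0 < (z k).im) (s : Fin n → Fin 2 → ℂ) (hM : IsUnit (gram z s))
    (r : Fin n → Fin 2 → ℂ) (hr : L1sys z s r) :
    ∑ k, (inn (s k) (r k) + inn (r k) (s k)) =
        2 * Complex.I * ∑ k, (starRingEnd ℂ (z k) - z k) ∧
      ∑ k, (inn (s k) (r k) + inn (r k) (s k)) = 4 * ∑ k, ((z k).im : ℂ) :=
  stmt_7_general n z him s hM r hr
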